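/- arXiv:2005.13239 — 3 statements merged into one kernel-verified Lean document; each statement's English description precedes it below -/
import Mathlib

section
/- Let M and M̂ be two MDPs with the same state space S, action space A, reward function r, initial distribution μ₀, and discount γ ∈ (0,1), but with transition kernels T and T̂ respectively. For a policy π, define G^π(s,a) = E_{s'∼T̂(s,a)}[V_M^π(s')] − E_{s'∼T(s,a)}[V_M^π(s')], where V_M^π is the value function of π in M. Then η_{M̂}(π) − η_M(π) = γ · Ē_{(s,a)∼ρ^π_{T̂}}[G^π(s,a)], where η denotes expected discounted return and ρ^π_{T̂}(s,a) = π(a|s)·Σ_{t≥0} γ^t P^π_{T̂,t}(s) is the (unnormalized) discounted occupancy measure under dynamics T̂. -/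
open scoped BigOperators
open Filter Topology Classical

section MDP

variable {S A : Type*} [Fintype S] [Fintype A]

/-- π is a valid stochastic policy. -/
def IsPolicy (π : S → A → ℝ) : Prop :=
  (∀ s a, 0 ≤ π s a) ∧ ∀ s, ∑ a, π s a = 1

/-- T is a valid transition kernel. -/
def IsKernel (T : S → A → S → ℝ) : Prop :=
  (∀ s a s', 0 ≤ T s a s') ∧ ∀ s a, ∑ s', T s a s' = 1

/-- μ is a probability distribution on states. -/
def IsDist (μ : S → ℝ) : Prop :=
  (∀ s, 0 ≤ μ s) ∧ ∑ s, μ s = 1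

/-- Distribution of the state at time t under policy π and dynamics T, from μ0. -/
def stateDist (T : S → A → S → ℝ) (π : S → A → ℝ) (μ0 : S → ℝ) : ℕ → S → ℝ
  | 0 => μ0
  | t + 1 => fun s' => ∑ s, ∑ a, stateDist T π μ0 t s * π s a * T s a s'

/-- Unnormalized discounted occupancy measure ρ^π_T(s,a). -/
noncomputable def occupancy (γ : ℝ) (T : S → A → S → ℝ) (π : S → A → ℝ)
    (μ0 : S → ℝ) (s : S) (a : A) : ℝ :=
  π s a * ∑' t : ℕ, γ ^ t * stateDist T π μ0 t s

/-- Improper expectation Ē of f with respect to the occupancy measure. -/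
noncomputable def expOcc (γ : ℝ) (T : S → A → S → ℝ) (π : S → A → ℝ)
    (μ0 : S → ℝ) (f : S → A → ℝ) : ℝ :=
  ∑ s, ∑ a, occupancy γ T π μ0 s a * f s a

/-- Expected discounted return η_M(π). -/
noncomputable def ret (γ : ℝ) (T : S → A → S → ℝ) (π : S → A → ℝ)
    (μ0 : S → ℝ) (r : S → A → ℝ) : ℝ :=
  ∑' t : ℕ, γ ^ t * ∑ s, ∑ a, stateDist T π μ0 t s * π s a * r s a

/-- Value function V_M^π(s): return starting from the Dirac distribution at s. -/
noncomputable def value (γ : ℝ) (T : S → A → S → ℝ) (π : S → A → ℝ)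
    (r : S → A → ℝ) (s0 : S) : ℝ :=
  ret γ T π (fun s => if s = s0 then 1 else 0) r

/-- G^π(s,a) = E_{s'∼T̂(s,a)}[V_M^π(s')] − E_{s'∼T(s,a)}[V_M^π(s')]. -/
noncomputable def Gpi (γ : ℝ) (T Th : S → A → S → ℝ) (π : S → A → ℝ)
    (r : S → A → ℝ) (s : S) (a : A) : ℝ :=
  (∑ s', Th s a s' * value γ T π r s') - ∑ s', T s a s' * value γ T π r s'

/-- Total variation distance between two distributions on a finite set. -/
noncomputable def tvDist (P Q : S → ℝ) : ℝ :=
  ⨆ E : Finset S, |(∑ s ∈ E, P s) - ∑ s ∈ E, Q s|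

/-- Integral probability metric induced by a function class F. -/
noncomputable def ipm (F : Set (S → ℝ)) (P Q : S → ℝ) : ℝ :=
  sSup {x : ℝ | ∃ f ∈ F, x = |(∑ s, P s * f s) - ∑ s, Q s * f s|}

/-!
Let `V` be the value function of `π` under `T` and `P_K V (s) = E_{a ∼ π(s), s' ∼ K(s,a)} V(s')`.
Bellman's equation `r̄ = V - γ P_T V` splits the mean reward as
`r̄ = (V - γ P_T̂ V) + γ (P_T̂ V - P_T V)`, and the last bracket is the `π`-average of `G^π`.
Against the discounted state distributions of `T̂` the first bracket telescopes to
`∑ μ₀ V = η_M(π)`, while the second yields `γ Ē[G^π]`.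
-/

def policyAvg (π f : S → A → ℝ) (s : S) : ℝ :=
  ∑ a, π s a * f s a

def nextExpect (T : S → A → S → ℝ) (V : S → ℝ) (s : S) (a : A) : ℝ :=
  ∑ s', T s a s' * V s'

noncomputable def discountedSum (γ : ℝ) (T : S → A → S → ℝ) (π : S → A → ℝ) (μ0 g : S → ℝ) : ℝ :=
  ∑' t : ℕ, γ ^ t * ∑ s, stateDist T π μ0 t s * g s

lemma summable_pow_mul_of_abs_le {γ C : ℝ} (hγ : |γ| < 1) {c : ℕ → ℝ} (hc : ∀ t, |c t| ≤ C) :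
    Summable fun t => γ ^ t * c t := by
  refine ((summable_geometric_of_abs_lt_one hγ).norm.mul_left C).of_norm_bounded fun t => ?_
  rw [norm_mul, norm_pow, mul_comm]
  exact mul_le_mul_of_nonneg_right (hc t) (by positivity)

section Discounted

variable {γ : ℝ} {T : S → A → S → ℝ} {π : S → A → ℝ} {μ0 : S → ℝ}

lemma sum_stateDist_succ_mul (V : S → ℝ) (t : ℕ) :
    ∑ s, stateDist T π μ0 (t + 1) s * V s
      = ∑ s, stateDist T π μ0 t s * policyAvg π (nextExpect T V) s := by
  simp only [stateDist, policyAvg, nextExpect, Finset.sum_mul, Finset.mul_sum]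
  rw [Finset.sum_comm]
  refine Finset.sum_congr rfl fun s _ => ?_
  rw [Finset.sum_comm]
  exact Finset.sum_congr rfl fun a _ => Finset.sum_congr rfl fun s' _ => by ring

lemma sum_stateDist (hT : ∀ s a, ∑ s', T s a s' = 1) (hπ : ∀ s, ∑ a, π s a = 1) (t : ℕ) :
    ∑ s, stateDist T π μ0 t s = ∑ s, μ0 s := by
  induction t with
  | zero => rfl
  | succ t ih =>
    simpa [policyAvg, nextExpect, hT, hπ, ih] using
      sum_stateDist_succ_mul (T := T) (π := π) (μ0 := μ0) (fun _ => 1) t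

lemma stateDist_nonneg (hT : ∀ s a s', 0 ≤ T s a s') (hπ : ∀ s a, 0 ≤ π s a)
    (hμ : ∀ s, 0 ≤ μ0 s) (t : ℕ) (s : S) : 0 ≤ stateDist T π μ0 t s := by
  induction t generalizing s with
  | zero => exact hμ s
  | succ t ih =>
    exact Finset.sum_nonneg fun s₁ _ => Finset.sum_nonneg fun a _ =>
      mul_nonneg (mul_nonneg (ih s₁) (hπ s₁ a)) (hT s₁ a s)

lemma stateDist_le_sum (hT : IsKernel T) (hπ : IsPolicy π) (hμ : ∀ s, 0 ≤ μ0 s) (t : ℕ) (s : S) :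
    stateDist T π μ0 t s ≤ ∑ s, μ0 s :=
  (Finset.single_le_sum (fun s _ => stateDist_nonneg hT.1 hπ.1 hμ t s) (Finset.mem_univ s)).trans_eq
    (sum_stateDist hT.2 hπ.2 t)

lemma stateDist_succ_eq (t : ℕ) :
    stateDist T π μ0 (t + 1) = stateDist T π (stateDist T π μ0 1) t := by
  induction t with
  | zero => rfl
  | succ t ih => rw [stateDist, ih]; rfl

lemma stateDist_eq_sum_dirac (t : ℕ) (s : S) :
    stateDist T π μ0 t s
      = ∑ s₀, μ0 s₀ * stateDist T π (fun s => if s = s₀ then 1 else 0) t s := by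
  induction t generalizing s with
  | zero => simp [stateDist]
  | succ t ih =>
    simp only [stateDist, ih, Finset.sum_mul, Finset.mul_sum]
    conv_rhs => rw [Finset.sum_comm]
    refine Finset.sum_congr rfl fun s₁ _ => ?_
    conv_rhs => rw [Finset.sum_comm]
    exact Finset.sum_congr rfl fun a _ => Finset.sum_congr rfl fun s₀ _ => by ring

lemma summable_pow_mul_stateDist (hγ : |γ| < 1) (hT : IsKernel T) (hπ : IsPolicy π)
    (hμ : ∀ s, 0 ≤ μ0 s) (s : S) : Summable fun t => γ ^ t * stateDist T π μ0 t s :=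
  summable_pow_mul_of_abs_le hγ fun t => by
    rw [abs_of_nonneg (stateDist_nonneg hT.1 hπ.1 hμ t s)]
    exact stateDist_le_sum hT hπ hμ t s

lemma summable_pow_mul_sum_stateDist_mul (hγ : |γ| < 1) (hT : IsKernel T) (hπ : IsPolicy π)
    (hμ : ∀ s, 0 ≤ μ0 s) (g : S → ℝ) :
    Summable fun t => γ ^ t * ∑ s, stateDist T π μ0 t s * g s := by
  simp only [Finset.mul_sum, ← mul_assoc]
  exact summable_sum fun s _ => (summable_pow_mul_stateDist hγ hT hπ hμ s).mul_right (g s)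

lemma discountedSum_add (hγ : |γ| < 1) (hT : IsKernel T) (hπ : IsPolicy π)
    (hμ : ∀ s, 0 ≤ μ0 s) (g h : S → ℝ) :
    discountedSum γ T π μ0 (fun s => g s + h s)
      = discountedSum γ T π μ0 g + discountedSum γ T π μ0 h := by
  rw [discountedSum, discountedSum, discountedSum,
    ← (summable_pow_mul_sum_stateDist_mul hγ hT hπ hμ g).tsum_add
      (summable_pow_mul_sum_stateDist_mul hγ hT hπ hμ h)]
  simp only [mul_add, Finset.sum_add_distrib]

lemma discountedSum_const_mul (c : ℝ) (g : S → ℝ) :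
    discountedSum γ T π μ0 (fun s => c * g s) = c * discountedSum γ T π μ0 g := by
  rw [discountedSum, discountedSum, ← tsum_mul_left]
  refine tsum_congr fun t => ?_
  rw [Finset.mul_sum, Finset.mul_sum, Finset.mul_sum]
  exact Finset.sum_congr rfl fun s _ => by ring

lemma discountedSum_sub_mul_nextExpect (hγ : |γ| < 1) (hT : IsKernel T) (hπ : IsPolicy π)
    (hμ : ∀ s, 0 ≤ μ0 s) (V : S → ℝ) :
    discountedSum γ T π μ0 (fun s => V s - γ * policyAvg π (nextExpect T V) s)
      = ∑ s, μ0 s * V s := by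
  set a : ℕ → ℝ := fun t => γ ^ t * ∑ s, stateDist T π μ0 t s * V s
  have ha : Summable a := summable_pow_mul_sum_stateDist_mul hγ hT hπ hμ V
  have hterm : ∀ t, γ ^ t * ∑ s, stateDist T π μ0 t s * (V s - γ * policyAvg π (nextExpect T V) s)
      = a t - a (t + 1) := fun t => by
    simp only [a]
    rw [sum_stateDist_succ_mul]
    simp only [mul_sub, Finset.sum_sub_distrib, Finset.mul_sum, pow_succ]
    exact congrArg _ (Finset.sum_congr rfl fun s _ => by ring)
  rw [discountedSum, tsum_congr hterm, ha.tsum_sub ((summable_nat_add_iff 1).mpr ha),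
    ha.tsum_eq_zero_add]
  simp [a, stateDist]

lemma discountedSum_eq_add_discountedSum_stateDist_one (hγ : |γ| < 1) (hT : IsKernel T)
    (hπ : IsPolicy π) (hμ : ∀ s, 0 ≤ μ0 s) (g : S → ℝ) :
    discountedSum γ T π μ0 g
      = ∑ s, μ0 s * g s + γ * discountedSum γ T π (stateDist T π μ0 1) g := by
  rw [discountedSum, (summable_pow_mul_sum_stateDist_mul hγ hT hπ hμ g).tsum_eq_zero_add,
    discountedSum, ← tsum_mul_left]
  simp only [pow_zero, one_mul]
  congr 1
  exact tsum_congr fun t => by rw [stateDist_succ_eq, pow_succ]; ring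

lemma discountedSum_eq_sum_dirac (hγ : |γ| < 1) (hT : IsKernel T) (hπ : IsPolicy π)
    (g : S → ℝ) :
    discountedSum γ T π μ0 g
      = ∑ s₀, μ0 s₀ * discountedSum γ T π (fun s => if s = s₀ then 1 else 0) g := by
  have hsum : ∀ s₀ : S, Summable fun t => γ ^ t *
      ∑ s, stateDist T π (fun s => if s = s₀ then 1 else 0) t s * g s := fun s₀ =>
    summable_pow_mul_sum_stateDist_mul hγ hT hπ (fun s => by split_ifs <;> norm_num) g
  simp only [discountedSum, ← tsum_mul_left]
  rw [← Summable.tsum_finsetSum fun s₀ _ => (hsum s₀).mul_left (μ0 s₀)]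
  refine tsum_congr fun t => ?_
  simp only [stateDist_eq_sum_dirac (μ0 := μ0) t, Finset.sum_mul, Finset.mul_sum]
  rw [Finset.sum_comm]
  exact Finset.sum_congr rfl fun _ _ => Finset.sum_congr rfl fun _ _ => by ring

lemma ret_eq_discountedSum (r : S → A → ℝ) :
    ret γ T π μ0 r = discountedSum γ T π μ0 (policyAvg π r) := by
  refine tsum_congr fun t => congrArg _ (Finset.sum_congr rfl fun s _ => ?_)
  rw [policyAvg, Finset.mul_sum]
  exact Finset.sum_congr rfl fun a _ => by ring

lemma ret_eq_sum_value (hγ : |γ| < 1) (hT : IsKernel T) (hπ : IsPolicy π) (r : S → A → ℝ) :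
    ret γ T π μ0 r = ∑ s₀, μ0 s₀ * value γ T π r s₀ := by
  simp only [value, ret_eq_discountedSum]
  exact discountedSum_eq_sum_dirac hγ hT hπ _

lemma value_eq_policyAvg_add (hγ : |γ| < 1) (hT : IsKernel T) (hπ : IsPolicy π)
    (r : S → A → ℝ) (s₀ : S) :
    value γ T π r s₀
      = policyAvg π r s₀ + γ * policyAvg π (nextExpect T (value γ T π r)) s₀ := by
  have hdirac : ∀ s, (0 : ℝ) ≤ if s = s₀ then 1 else 0 := fun s => by split_ifs <;> norm_num
  rw [value, ret_eq_discountedSum,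
    discountedSum_eq_add_discountedSum_stateDist_one hγ hT hπ hdirac, ← ret_eq_discountedSum,
    ret_eq_sum_value hγ hT hπ, ← zero_add 1, sum_stateDist_succ_mul]
  simp [stateDist]

lemma expOcc_eq_discountedSum (hγ : |γ| < 1) (hT : IsKernel T) (hπ : IsPolicy π)
    (hμ : ∀ s, 0 ≤ μ0 s) (f : S → A → ℝ) :
    expOcc γ T π μ0 f = discountedSum γ T π μ0 (policyAvg π f) := by
  rw [expOcc, discountedSum]
  simp only [Finset.mul_sum, ← mul_assoc]
  rw [Summable.tsum_finsetSum fun s _ => (summable_pow_mul_stateDist hγ hT hπ hμ s).mul_right _]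
  refine Finset.sum_congr rfl fun s _ => ?_
  rw [tsum_mul_right, policyAvg, Finset.mul_sum]
  exact Finset.sum_congr rfl fun a _ => by rw [occupancy]; ring

lemma policyAvg_Gpi (T' : S → A → S → ℝ) (r : S → A → ℝ) (s : S) :
    policyAvg π (Gpi γ T T' π r) s
      = policyAvg π (nextExpect T' (value γ T π r)) s
        - policyAvg π (nextExpect T (value γ T π r)) s := by
  simp only [policyAvg, Gpi, nextExpect, mul_sub, Finset.sum_sub_distrib]

end Discounted

theorem telescoping_lemma_general (γ : ℝ) (hγ0 : 0 < γ) (hγ1 : γ < 1)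
    (T Th : S → A → S → ℝ) (hT : IsKernel T) (hTh : IsKernel Th)
    (μ0 : S → ℝ) (hμ : IsDist μ0) (r : S → A → ℝ)
    (π : S → A → ℝ) (hπ : IsPolicy π) :
    ret γ Th π μ0 r - ret γ T π μ0 r = γ * expOcc γ Th π μ0 (Gpi γ T Th π r) := by
  have hγ : |γ| < 1 := abs_lt.2 ⟨by linarith, hγ1⟩
  have hsplit : policyAvg π r = fun s =>
      (value γ T π r s - γ * policyAvg π (nextExpect Th (value γ T π r)) s)
        + γ * policyAvg π (Gpi γ T Th π r) s := by
    funext s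
    rw [policyAvg_Gpi, value_eq_policyAvg_add hγ hT hπ r s]
    ring
  rw [ret_eq_discountedSum, hsplit, discountedSum_add hγ hTh hπ hμ.1,
    discountedSum_sub_mul_nextExpect hγ hTh hπ hμ.1, discountedSum_const_mul,
    ← expOcc_eq_discountedSum hγ hTh hπ hμ.1, ret_eq_sum_value hγ hT hπ]
  ring

/-- Telescoping lemma: η_M̂(π) − η_M(π) = γ · Ē_{ρ^π_T̂}[G^π(s,a)]. -/
theorem telescoping_lemma (γ : ℝ) (hγ0 : 0 < γ) (hγ1 : γ < 1)
    (T Th : S → A → S → ℝ) (hT : IsKernel T) (hTh : IsKernel Th)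
    (μ0 : S → ℝ) (hμ : IsDist μ0) (r : S → A → ℝ)
    (rmax : ℝ) (hr : ∀ s a, |r s a| ≤ rmax)
    (π : S → A → ℝ) (hπ : IsPolicy π) :
    ret γ Th π μ0 r - ret γ T π μ0 r = γ * expOcc γ Th π μ0 (Gpi γ T Th π r) :=
  telescoping_lemma_general γ hγ0 hγ1 T Th hT hTh μ0 hμ r π hπ

end MDP
end

section
/- Under the assumptions that γ·|G^π(s,a)| ≤ λ·u(s,a) for all policies π and all (s,a), define ε_u(π) = Ē_{(s,a)∼ρ^π_{T̂}}[u(s,a)] and let π̂ = argmax_π η_{M̃}(π), where M̃ is the MDP with dynamics T̂ and penalized reward r̃ = r − λu. Then for every policy π, η_M(π̂) ≥ η_M(π) − 2λ·ε_u(π). -/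
open scoped BigOperators
open Filter Topology Classical

section MDP

variable {S A : Type*} [Fintype S] [Fintype A]

section Aux

variable {S A : Type*} [Fintype S] [Fintype A]

lemma sd_nonneg {T : S → A → S → ℝ} {π : S → A → ℝ} {μ0 : S → ℝ}
    (hT : IsKernel T) (hπ : IsPolicy π) (hμ : ∀ s, 0 ≤ μ0 s) :
    ∀ t s, 0 ≤ stateDist T π μ0 t s := by
  intro t
  induction t with
  | zero => exact hμ
  | succ t ih =>
    intro s'
    apply Finset.sum_nonneg; intro s _
    apply Finset.sum_nonneg; intro a _
    exact mul_nonneg (mul_nonneg (ih s) (hπ.1 s a)) (hT.1 s a s')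

lemma sd_sum {T : S → A → S → ℝ} {π : S → A → ℝ} {μ0 : S → ℝ}
    (hT : IsKernel T) (hπ : IsPolicy π) (hμ : ∑ s, μ0 s = 1) :
    ∀ t, ∑ s, stateDist T π μ0 t s = 1 := by
  intro t
  induction t with
  | zero => exact hμ
  | succ t ih =>
    show ∑ s', ∑ s, ∑ a, stateDist T π μ0 t s * π s a * T s a s' = 1
    rw [Finset.sum_comm]
    calc ∑ s, ∑ s', ∑ a, stateDist T π μ0 t s * π s a * T s a s'
        = ∑ s, ∑ a, ∑ s', stateDist T π μ0 t s * π s a * T s a s' :=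
          Finset.sum_congr rfl (fun s _ => Finset.sum_comm)
      _ = ∑ s, stateDist T π μ0 t s := by
          refine Finset.sum_congr rfl (fun s _ => ?_)
          simp_rw [← Finset.mul_sum, hT.2, mul_one]
          rw [← Finset.mul_sum, hπ.2, mul_one]
      _ = 1 := ih

lemma sd_le_one {T : S → A → S → ℝ} {π : S → A → ℝ} {μ0 : S → ℝ}
    (hT : IsKernel T) (hπ : IsPolicy π) (hμ : IsDist μ0) (t : ℕ) (s : S) :
    stateDist T π μ0 t s ≤ 1 := by
  have h := sd_sum hT hπ hμ.2 t
  calc stateDist T π μ0 t s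
      ≤ ∑ s', stateDist T π μ0 t s' :=
        Finset.single_le_sum (fun s' _ => sd_nonneg hT hπ hμ.1 t s') (Finset.mem_univ s)
    _ = 1 := h

lemma summable_geom_bdd {γ : ℝ} (hγ0 : 0 ≤ γ) (hγ1 : γ < 1) (g : ℕ → ℝ) (C : ℝ)
    (hC : ∀ t, |g t| ≤ C) : Summable (fun t => γ ^ t * g t) := by
  apply Summable.of_abs
  refine Summable.of_nonneg_of_le (fun t => abs_nonneg _) (fun t => ?_)
    ((summable_geometric_of_lt_one hγ0 hγ1).mul_right C)
  rw [abs_mul, abs_pow, abs_of_nonneg hγ0]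
  exact mul_le_mul_of_nonneg_left (hC t) (pow_nonneg hγ0 t)

lemma pol_le_one {π : S → A → ℝ} (hπ : IsPolicy π) (s : S) (a : A) : π s a ≤ 1 := by
  calc π s a ≤ ∑ a', π s a' :=
        Finset.single_le_sum (fun a' _ => hπ.1 s a') (Finset.mem_univ a)
    _ = 1 := hπ.2 s

lemma c_bound {T : S → A → S → ℝ} {π : S → A → ℝ} {μ0 : S → ℝ}
    (hT : IsKernel T) (hπ : IsPolicy π) (hμ : IsDist μ0) (f : S → A → ℝ) (t : ℕ) :
    |∑ s, ∑ a, stateDist T π μ0 t s * π s a * f s a| ≤ ∑ s, ∑ a, |f s a| := by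
  calc |∑ s, ∑ a, stateDist T π μ0 t s * π s a * f s a|
      ≤ ∑ s, |∑ a, stateDist T π μ0 t s * π s a * f s a| := Finset.abs_sum_le_sum_abs _ _
    _ ≤ ∑ s, ∑ a, |stateDist T π μ0 t s * π s a * f s a| :=
        Finset.sum_le_sum (fun s _ => Finset.abs_sum_le_sum_abs _ _)
    _ ≤ ∑ s, ∑ a, |f s a| := by
        refine Finset.sum_le_sum (fun s _ => Finset.sum_le_sum (fun a _ => ?_))
        rw [abs_mul, abs_mul]
        have h1 : |stateDist T π μ0 t s| ≤ 1 := by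
          rw [abs_of_nonneg (sd_nonneg hT hπ hμ.1 t s)]; exact sd_le_one hT hπ hμ t s
        have h2 : |π s a| ≤ 1 := by
          rw [abs_of_nonneg (hπ.1 s a)]; exact pol_le_one hπ s a
        calc |stateDist T π μ0 t s| * |π s a| * |f s a|
            ≤ 1 * |f s a| :=
              mul_le_mul_of_nonneg_right (mul_le_one₀ h1 (abs_nonneg _) h2) (abs_nonneg _)
          _ = |f s a| := one_mul _

lemma summable_ret {γ : ℝ} (hγ0 : 0 ≤ γ) (hγ1 : γ < 1)
    {T : S → A → S → ℝ} {π : S → A → ℝ} {μ0 : S → ℝ}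
    (hT : IsKernel T) (hπ : IsPolicy π) (hμ : IsDist μ0) (f : S → A → ℝ) :
    Summable (fun t => γ ^ t * ∑ s, ∑ a, stateDist T π μ0 t s * π s a * f s a) :=
  summable_geom_bdd hγ0 hγ1 _ _ (c_bound hT hπ hμ f)

lemma dirac_isDist (s0 : S) : IsDist (fun s => if s = s0 then (1:ℝ) else 0) := by
  constructor
  · intro s; dsimp only; split <;> norm_num
  · simp

lemma sum_comm3 {α β δ : Type*} [Fintype α] [Fintype β] [Fintype δ] (h : α → β → δ → ℝ) :
    ∑ a, ∑ b, ∑ c, h a b c = ∑ c, ∑ a, ∑ b, h a b c := by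
  calc ∑ a, ∑ b, ∑ c, h a b c
      = ∑ a, ∑ c, ∑ b, h a b c := Finset.sum_congr rfl (fun _ _ => Finset.sum_comm)
    _ = ∑ c, ∑ a, ∑ b, h a b c := Finset.sum_comm

lemma sd_dirac {T : S → A → S → ℝ} {π : S → A → ℝ} (μ0 : S → ℝ) :
    ∀ (t : ℕ) (s : S), stateDist T π μ0 t s
      = ∑ s0, μ0 s0 * stateDist T π (fun s => if s = s0 then 1 else 0) t s := by
  intro t
  induction t with
  | zero =>
    intro s
    show μ0 s = ∑ s0, μ0 s0 * (if s = s0 then 1 else 0)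
    simp
  | succ t ih =>
    intro s'
    show ∑ s, ∑ a, stateDist T π μ0 t s * π s a * T s a s'
      = ∑ s0, μ0 s0 * ∑ s, ∑ a,
          stateDist T π (fun s => if s = s0 then 1 else 0) t s * π s a * T s a s'
    simp_rw [ih, Finset.sum_mul]
    rw [sum_comm3]
    simp_rw [Finset.mul_sum]
    exact Finset.sum_congr rfl fun s0 _ => Finset.sum_congr rfl fun s _ =>
      Finset.sum_congr rfl fun a _ => by ring

lemma ret_linear {γ : ℝ} (hγ0 : 0 ≤ γ) (hγ1 : γ < 1)
    {T : S → A → S → ℝ} {π : S → A → ℝ}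
    (hT : IsKernel T) (hπ : IsPolicy π) (μ0 : S → ℝ) (f : S → A → ℝ) :
    ret γ T π μ0 f = ∑ s0, μ0 s0 * value γ T π f s0 := by
  unfold ret value ret
  have hsumm : ∀ s0 : S, Summable (fun t => μ0 s0 * (γ ^ t *
      ∑ s, ∑ a, stateDist T π (fun s => if s = s0 then 1 else 0) t s * π s a * f s a)) :=
    fun s0 => (summable_ret hγ0 hγ1 hT hπ (dirac_isDist s0) f).mul_left _
  calc ∑' t, γ ^ t * ∑ s, ∑ a, stateDist T π μ0 t s * π s a * f s a
      = ∑' t, ∑ s0, μ0 s0 * (γ ^ t *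
          ∑ s, ∑ a, stateDist T π (fun s => if s = s0 then 1 else 0) t s * π s a * f s a) := by
        refine tsum_congr (fun t => ?_)
        simp_rw [sd_dirac μ0 t, Finset.sum_mul]
        rw [sum_comm3]
        simp_rw [Finset.mul_sum]
        exact Finset.sum_congr rfl fun s0 _ => Finset.sum_congr rfl fun s _ =>
          Finset.sum_congr rfl fun a _ => by ring
      _ = ∑ s0, μ0 s0 * ∑' t, γ ^ t *
          ∑ s, ∑ a, stateDist T π (fun s => if s = s0 then 1 else 0) t s * π s a * f s a := by
        rw [Summable.tsum_finsetSum (fun s0 _ => hsumm s0)]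
        exact Finset.sum_congr rfl (fun s0 _ => tsum_mul_left)

lemma sd_shift {T : S → A → S → ℝ} {π : S → A → ℝ} (μ0 : S → ℝ) :
    ∀ t, stateDist T π μ0 (t + 1) = stateDist T π (stateDist T π μ0 1) t := by
  intro t
  induction t with
  | zero => rfl
  | succ t ih =>
    show (fun s' => ∑ s, ∑ a, stateDist T π μ0 (t + 1) s * π s a * T s a s') = _
    rw [ih]
    rfl

lemma summable_sd {γ : ℝ} (hγ0 : 0 ≤ γ) (hγ1 : γ < 1)
    {T : S → A → S → ℝ} {π : S → A → ℝ} {μ0 : S → ℝ}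
    (hT : IsKernel T) (hπ : IsPolicy π) (hμ : IsDist μ0) (s : S) :
    Summable (fun t => γ ^ t * stateDist T π μ0 t s) := by
  refine summable_geom_bdd hγ0 hγ1 _ 1 (fun t => ?_)
  rw [abs_of_nonneg (sd_nonneg hT hπ hμ.1 t s)]
  exact sd_le_one hT hπ hμ t s

lemma bellman {γ : ℝ} (hγ0 : 0 ≤ γ) (hγ1 : γ < 1)
    {T : S → A → S → ℝ} {π : S → A → ℝ} {μ0 : S → ℝ}
    (hT : IsKernel T) (hπ : IsPolicy π) (hμ : IsDist μ0) (f : S → A → ℝ) :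
    ret γ T π μ0 f = (∑ s, ∑ a, μ0 s * π s a * f s a)
      + γ * ret γ T π (stateDist T π μ0 1) f := by
  have hs := summable_ret hγ0 hγ1 hT hπ hμ f
  unfold ret
  rw [Summable.tsum_eq_zero_add hs]
  congr 1
  · show γ ^ 0 * ∑ s, ∑ a, stateDist T π μ0 0 s * π s a * f s a = _
    rw [pow_zero, one_mul]
    rfl
  · calc ∑' t, γ ^ (t + 1) * ∑ s, ∑ a, stateDist T π μ0 (t + 1) s * π s a * f s a
        = ∑' t, γ * (γ ^ t *
            ∑ s, ∑ a, stateDist T π (stateDist T π μ0 1) t s * π s a * f s a) := by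
          refine tsum_congr fun t => ?_
          rw [sd_shift μ0 t]; ring
      _ = γ * ∑' t, γ ^ t *
            ∑ s, ∑ a, stateDist T π (stateDist T π μ0 1) t s * π s a * f s a :=
          tsum_mul_left

lemma expOcc_eq {γ : ℝ} (hγ0 : 0 ≤ γ) (hγ1 : γ < 1)
    {Th : S → A → S → ℝ} {π : S → A → ℝ} {μ0 : S → ℝ}
    (hTh : IsKernel Th) (hπ : IsPolicy π) (hμ : IsDist μ0) (f : S → A → ℝ) :
    expOcc γ Th π μ0 f = ret γ Th π μ0 f := by
  have hsum : ∀ (s : S) (a : A),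
      Summable (fun t => γ ^ t * stateDist Th π μ0 t s * (π s a * f s a)) :=
    fun s a => (summable_sd hγ0 hγ1 hTh hπ hμ s).mul_right _
  have hsum2 : ∀ s : S,
      Summable (fun t => ∑ a, γ ^ t * stateDist Th π μ0 t s * (π s a * f s a)) :=
    fun s => summable_sum (fun a _ => hsum s a)
  unfold expOcc occupancy ret
  calc ∑ s, ∑ a, π s a * (∑' t, γ ^ t * stateDist Th π μ0 t s) * f s a
      = ∑ s, ∑ a, ∑' t, γ ^ t * stateDist Th π μ0 t s * (π s a * f s a) := by
        refine Finset.sum_congr rfl fun s _ => Finset.sum_congr rfl fun a _ => ?_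
        rw [mul_comm (π s a), mul_assoc, ← tsum_mul_right]
    _ = ∑ s, ∑' t, ∑ a, γ ^ t * stateDist Th π μ0 t s * (π s a * f s a) :=
        Finset.sum_congr rfl fun s _ => (Summable.tsum_finsetSum (fun a _ => hsum s a)).symm
    _ = ∑' t, ∑ s, ∑ a, γ ^ t * stateDist Th π μ0 t s * (π s a * f s a) :=
        (Summable.tsum_finsetSum (fun s _ => hsum2 s)).symm
    _ = ∑' t, γ ^ t * ∑ s, ∑ a, stateDist Th π μ0 t s * π s a * f s a := by
        refine tsum_congr fun t => ?_
        simp_rw [Finset.mul_sum]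
        exact Finset.sum_congr rfl fun s _ => Finset.sum_congr rfl fun a _ => by ring

lemma simulation {γ : ℝ} (hγ0 : 0 < γ) (hγ1 : γ < 1)
    {T Th : S → A → S → ℝ} {π : S → A → ℝ} {μ0 : S → ℝ}
    (hT : IsKernel T) (hTh : IsKernel Th) (hπ : IsPolicy π) (hμ : IsDist μ0)
    (r : S → A → ℝ) :
    ret γ Th π μ0 r = ret γ T π μ0 r + γ * expOcc γ Th π μ0 (Gpi γ T Th π r) := by
  set d : ℕ → S → ℝ := stateDist Th π μ0 with hd
  set V : S → ℝ := value γ T π r with hV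
  set B : ℕ → ℝ := fun j => γ ^ j * ∑ s, d j s * V s with hB
  set c : ℕ → ℝ := fun j => ∑ s, ∑ a, d j s * π s a * r s a with hc
  set e : ℕ → ℝ := fun j => ∑ s, ∑ a, d j s * π s a * Gpi γ T Th π r s a with he
  have hdist : ∀ j, IsDist (d j) := fun j => ⟨sd_nonneg hTh hπ hμ.1 j, sd_sum hTh hπ hμ.2 j⟩
  have expand : ∀ (j : ℕ) (K : S → A → S → ℝ),
      ∑ s', (∑ s, ∑ a, d j s * π s a * K s a s') * V s'
        = ∑ s, ∑ a, d j s * π s a * ∑ s', K s a s' * V s' := by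
    intro j K
    simp_rw [Finset.sum_mul]
    rw [← sum_comm3]
    simp_rw [Finset.mul_sum]
    exact Finset.sum_congr rfl fun s _ => Finset.sum_congr rfl fun a _ =>
      Finset.sum_congr rfl fun s' _ => by ring
  have h3 : ∀ j, ∑ s, d (j + 1) s * V s
      = ∑ s, stateDist T π (d j) 1 s * V s + e j := by
    intro j
    have l1 : ∑ s', d (j + 1) s' * V s'
        = ∑ s, ∑ a, d j s * π s a * ∑ s', Th s a s' * V s' := by
      have : ∀ s', d (j + 1) s' = ∑ s, ∑ a, d j s * π s a * Th s a s' := fun s' => rfl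
      simp_rw [this, Finset.sum_mul]
      rw [← sum_comm3]
      simp_rw [Finset.mul_sum]
      exact Finset.sum_congr rfl fun s _ => Finset.sum_congr rfl fun a _ =>
        Finset.sum_congr rfl fun s' _ => by ring
    have l2 : ∑ s', stateDist T π (d j) 1 s' * V s'
        = ∑ s, ∑ a, d j s * π s a * ∑ s', T s a s' * V s' := by
      have : ∀ s', stateDist T π (d j) 1 s' = ∑ s, ∑ a, d j s * π s a * T s a s' :=
        fun s' => rfl
      simp_rw [this, Finset.sum_mul]
      rw [← sum_comm3]
      simp_rw [Finset.mul_sum]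
      exact Finset.sum_congr rfl fun s _ => Finset.sum_congr rfl fun a _ =>
        Finset.sum_congr rfl fun s' _ => by ring
    rw [l1, l2, he]
    rw [← Finset.sum_add_distrib]
    refine Finset.sum_congr rfl fun s _ => ?_
    rw [← Finset.sum_add_distrib]
    refine Finset.sum_congr rfl fun a _ => ?_
    unfold Gpi
    ring
  have key : ∀ j, B j - B (j + 1) = γ ^ j * c j - γ ^ (j + 1) * e j := by
    intro j
    have h1 : ∑ s, d j s * V s = ret γ T π (d j) r :=
      (ret_linear hγ0.le hγ1 hT hπ (d j) r).symm
    have h2 : ret γ T π (d j) r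
        = c j + γ * ∑ s, stateDist T π (d j) 1 s * V s := by
      rw [bellman hγ0.le hγ1 hT hπ (hdist j) r,
        ret_linear hγ0.le hγ1 hT hπ (stateDist T π (d j) 1) r]
    have h3' := h3 j
    simp only [hB]
    rw [h1, h2, h3']
    ring
  have Sc : Summable (fun j => γ ^ j * c j) := summable_ret hγ0.le hγ1 hTh hπ hμ r
  have Se : Summable (fun j => γ ^ j * e j) :=
    summable_ret hγ0.le hγ1 hTh hπ hμ (Gpi γ T Th π r)
  have Se' : Summable (fun j => γ ^ (j + 1) * e j) := by
    have : (fun j => γ ^ (j + 1) * e j) = fun j => γ * (γ ^ j * e j) := by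
      funext j; ring
    rw [this]; exact Se.mul_left γ
  have SB : Summable (fun j => B j - B (j + 1)) := by
    have : (fun j => B j - B (j + 1)) = fun j => γ ^ j * c j - γ ^ (j + 1) * e j := by
      funext j; exact key j
    rw [this]; exact Sc.sub Se'
  have hBlim : Filter.Tendsto B Filter.atTop (nhds 0) := by
    have hC : ∀ n, ‖B n‖ ≤ γ ^ n * ∑ s, |V s| := by
      intro n
      rw [hB]
      simp only [Real.norm_eq_abs, abs_mul, abs_pow, abs_of_nonneg hγ0.le]
      refine mul_le_mul_of_nonneg_left ?_ (pow_nonneg hγ0.le n)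
      calc |∑ s, d n s * V s| ≤ ∑ s, |d n s * V s| := Finset.abs_sum_le_sum_abs _ _
        _ ≤ ∑ s, |V s| := by
            refine Finset.sum_le_sum fun s _ => ?_
            rw [abs_mul]
            calc |d n s| * |V s| ≤ 1 * |V s| := by
                  refine mul_le_mul_of_nonneg_right ?_ (abs_nonneg _)
                  rw [abs_of_nonneg ((hdist n).1 s)]
                  exact sd_le_one hTh hπ hμ n s
              _ = |V s| := one_mul _
    refine squeeze_zero_norm hC ?_
    have := (tendsto_pow_atTop_nhds_zero_of_lt_one hγ0.le hγ1).mul_const (∑ s, |V s|)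
    simpa using this
  have hHasSum : HasSum (fun j => B j - B (j + 1)) (B 0) := by
    rw [SB.hasSum_iff_tendsto_nat]
    have heq : ∀ n, ∑ i ∈ Finset.range n, (B i - B (i + 1)) = B 0 - B n :=
      fun n => Finset.sum_range_sub' B n
    simp_rw [heq]
    simpa using tendsto_const_nhds.sub hBlim
  have main : ret γ Th π μ0 r = B 0 + ∑' j, γ ^ (j + 1) * e j := by
    have : ret γ Th π μ0 r = ∑' j, ((B j - B (j + 1)) + γ ^ (j + 1) * e j) := by
      refine tsum_congr fun j => ?_
      rw [key j]; ring
    rw [this, Summable.tsum_add SB Se', hHasSum.tsum_eq]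
  have hB0 : B 0 = ret γ T π μ0 r := by
    rw [hB]
    simp only [pow_zero, one_mul]
    rw [ret_linear hγ0.le hγ1 hT hπ μ0 r]
    rfl
  have hocc : γ * expOcc γ Th π μ0 (Gpi γ T Th π r) = ∑' j, γ ^ (j + 1) * e j := by
    rw [expOcc_eq hγ0.le hγ1 hTh hπ hμ (Gpi γ T Th π r)]
    show γ * ∑' j, γ ^ j * e j = _
    rw [← tsum_mul_left]
    exact tsum_congr fun j => by ring
  rw [main, hB0, hocc]

lemma occ_nonneg {γ : ℝ} (hγ0 : 0 ≤ γ)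
    {Th : S → A → S → ℝ} {π : S → A → ℝ} {μ0 : S → ℝ}
    (hTh : IsKernel Th) (hπ : IsPolicy π) (hμ : IsDist μ0) (s : S) (a : A) :
    0 ≤ occupancy γ Th π μ0 s a :=
  mul_nonneg (hπ.1 s a) (tsum_nonneg fun t =>
    mul_nonneg (pow_nonneg hγ0 t) (sd_nonneg hTh hπ hμ.1 t s))

lemma expOcc_abs_le {γ lam : ℝ} (hγ0 : 0 ≤ γ)
    {Th : S → A → S → ℝ} {π : S → A → ℝ} {μ0 : S → ℝ}
    (hTh : IsKernel Th) (hπ : IsPolicy π) (hμ : IsDist μ0)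
    (g u : S → A → ℝ)
    (h : ∀ s a, γ * |g s a| ≤ lam * u s a) :
    |γ * expOcc γ Th π μ0 g| ≤ lam * expOcc γ Th π μ0 u := by
  unfold expOcc
  rw [Finset.mul_sum, Finset.mul_sum]
  simp_rw [Finset.mul_sum]
  calc |∑ s, ∑ a, γ * (occupancy γ Th π μ0 s a * g s a)|
      ≤ ∑ s, |∑ a, γ * (occupancy γ Th π μ0 s a * g s a)| := Finset.abs_sum_le_sum_abs _ _
    _ ≤ ∑ s, ∑ a, |γ * (occupancy γ Th π μ0 s a * g s a)| :=
        Finset.sum_le_sum fun s _ => Finset.abs_sum_le_sum_abs _ _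
    _ ≤ ∑ s, ∑ a, lam * (occupancy γ Th π μ0 s a * u s a) := by
        refine Finset.sum_le_sum fun s _ => Finset.sum_le_sum fun a _ => ?_
        have hoc := occ_nonneg hγ0 hTh hπ hμ s a
        have : |γ * (occupancy γ Th π μ0 s a * g s a)|
            = occupancy γ Th π μ0 s a * (γ * |g s a|) := by
          rw [abs_mul, abs_mul, abs_of_nonneg hγ0, abs_of_nonneg hoc]; ring
        rw [this]
        calc occupancy γ Th π μ0 s a * (γ * |g s a|)
            ≤ occupancy γ Th π μ0 s a * (lam * u s a) :=
              mul_le_mul_of_nonneg_left (h s a) hoc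
          _ = lam * (occupancy γ Th π μ0 s a * u s a) := by ring

lemma expOcc_sub {γ lam : ℝ}
    (Th : S → A → S → ℝ) (π : S → A → ℝ) (μ0 : S → ℝ) (r u : S → A → ℝ) :
    expOcc γ Th π μ0 (fun s a => r s a - lam * u s a)
      = expOcc γ Th π μ0 r - lam * expOcc γ Th π μ0 u := by
  unfold expOcc
  rw [Finset.mul_sum, ← Finset.sum_sub_distrib]
  refine Finset.sum_congr rfl fun s _ => ?_
  rw [Finset.mul_sum, ← Finset.sum_sub_distrib]
  exact Finset.sum_congr rfl fun a _ => by ring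

end Aux

/-- MOPO main theorem: η_M(π̂) ≥ η_M(π) − 2λ·ε_u(π) for every policy π. -/
theorem mopo_main (γ : ℝ) (hγ0 : 0 < γ) (hγ1 : γ < 1)
    (T Th : S → A → S → ℝ) (hT : IsKernel T) (hTh : IsKernel Th)
    (μ0 : S → ℝ) (hμ : IsDist μ0) (r : S → A → ℝ)
    (u : S → A → ℝ) (hu : ∀ s a, 0 ≤ u s a) (lam : ℝ) (hlam : 0 < lam)
    (hadm : ∀ π : S → A → ℝ, IsPolicy π → ∀ s a, γ * |Gpi γ T Th π r s a| ≤ lam * u s a)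
    (πhat : S → A → ℝ) (hπhat : IsPolicy πhat)
    (hopt : ∀ π : S → A → ℝ, IsPolicy π →
      expOcc γ Th π μ0 (fun s a => r s a - lam * u s a)
        ≤ expOcc γ Th πhat μ0 (fun s a => r s a - lam * u s a)) :
    ∀ π : S → A → ℝ, IsPolicy π →
      ret γ T πhat μ0 r ≥ ret γ T π μ0 r - 2 * lam * expOcc γ Th π μ0 u := by
  intro π hπ
  have sim1 := simulation hγ0 hγ1 hT hTh hπhat hμ r
  have sim2 := simulation hγ0 hγ1 hT hTh hπ hμ r
  have b1 := expOcc_abs_le hγ0.le hTh hπhat hμ _ u (hadm πhat hπhat)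
  have b2 := expOcc_abs_le hγ0.le hTh hπ hμ _ u (hadm π hπ)
  have e1 := expOcc_eq hγ0.le hγ1 hTh hπhat hμ r
  have e2 := expOcc_eq hγ0.le hγ1 hTh hπ hμ r
  have s1 := expOcc_sub (γ := γ) (lam := lam) Th πhat μ0 r u
  have s2 := expOcc_sub (γ := γ) (lam := lam) Th π μ0 r u
  have ho := hopt π hπ
  rw [s1, s2, e1, e2] at ho
  rw [abs_le] at b1 b2
  linarith [b1.1, b1.2, b2.1, b2.2, sim1, sim2, ho]

end MDP
end

section
/- Let W_j denote the expected discounted return when executing π under dynamics T̂ for the first j steps and dynamics T thereafter. Then W_{j+1} − W_j = γ^{j+1} · E_{s_j,a_j ∼ π,T̂}[G^π(s_j,a_j)], where the expectation is over the state-action pair at time j when rolling out π in T̂ from μ₀. -/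
/-! Under π the states form a Markov chain with transition matrix
`P s s' = ∑ a, π s a * T s a s'`, so the time-`t` state distribution is `μ₀ ᵥ* P ^ t` and
`V^π = ∑ₜ γᵗ Pᵗ r^π` is a Neumann series; for a row-stochastic `P` and `0 ≤ γ < 1` it converges
and satisfies the Bellman equation `V = r^π + γ • P V`. With `d` the time-`j` distribution under
`T̂` we get `W_{j+1} - W_j = γʲ ⟪d, r^π⟫ + γʲ⁺¹ ⟪d, P̂ V⟫ - γʲ ⟪d, V⟫`, and the Bellman equation
rewrites the last term so that only `γʲ⁺¹ ⟪d, (P̂ - P) V⟫` remains. -/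

open scoped BigOperators
open Filter Topology Classical

section MDP

variable {S A : Type*} [Fintype S] [Fintype A]

/-- Return of executing π under dynamics T̂ for the first j steps, then T thereafter. -/
noncomputable def Wmix (γ : ℝ) (T Th : S → A → S → ℝ) (π : S → A → ℝ)
    (μ0 : S → ℝ) (r : S → A → ℝ) (j : ℕ) : ℝ :=
  (∑ t ∈ Finset.range j, γ ^ t * ∑ s, ∑ a, stateDist Th π μ0 t s * π s a * r s a)
    + γ ^ j * ∑ s, stateDist Th π μ0 j s * value γ T π r s

open Matrix

namespace Matrix

variable {n : Type*} [Fintype n] [DecidableEq n] {M : Matrix n n ℝ}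

lemma abs_mulVec_apply_le_of_mem_rowStochastic (hM : M ∈ rowStochastic ℝ n) (v : n → ℝ)
    (i : n) : |(M *ᵥ v) i| ≤ ∑ j, |v j| :=
  calc |∑ j, M i j * v j| ≤ ∑ j, |M i j * v j| := Finset.abs_sum_le_sum_abs _ _
    _ ≤ ∑ j, |v j| := Finset.sum_le_sum fun j _ => by
      rw [abs_mul, abs_of_nonneg (nonneg_of_mem_rowStochastic hM)]
      exact mul_le_of_le_one_left (abs_nonneg _) (le_one_of_mem_rowStochastic hM)

lemma summable_pow_mul_pow_mulVec_apply {γ : ℝ} (hγ0 : 0 ≤ γ) (hγ1 : γ < 1)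
    (hM : M ∈ rowStochastic ℝ n) (v : n → ℝ) (i : n) :
    Summable fun t : ℕ => γ ^ t * (M ^ t *ᵥ v) i := by
  refine Summable.of_norm_bounded ((summable_geometric_of_lt_one hγ0 hγ1).mul_right
    (∑ j, |v j|)) fun t => ?_
  rw [Real.norm_eq_abs, abs_mul, abs_of_nonneg (pow_nonneg hγ0 t)]
  exact mul_le_mul_of_nonneg_left
    (abs_mulVec_apply_le_of_mem_rowStochastic (pow_mem hM t) v i) (pow_nonneg hγ0 t)

lemma tsum_pow_mul_pow_mulVec_eq_add_smul_mulVec {γ : ℝ} (hγ0 : 0 ≤ γ) (hγ1 : γ < 1)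
    (hM : M ∈ rowStochastic ℝ n) (v : n → ℝ) :
    (fun i => ∑' t : ℕ, γ ^ t * (M ^ t *ᵥ v) i)
      = v + γ • (M *ᵥ fun i => ∑' t : ℕ, γ ^ t * (M ^ t *ᵥ v) i) := by
  ext i
  have hsum (j : n) := summable_pow_mul_pow_mulVec_apply hγ0 hγ1 hM v j
  have hshift (t : ℕ) :
      γ ^ (t + 1) * (M ^ (t + 1) *ᵥ v) i = γ * ∑ j, M i j * (γ ^ t * (M ^ t *ᵥ v) j) := by
    rw [pow_succ', pow_succ', ← mulVec_mulVec, mul_assoc, mulVec, dotProduct, Finset.mul_sum]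
    exact congrArg _ (Finset.sum_congr rfl fun j _ => mul_left_comm _ _ _)
  rw [(hsum i).tsum_eq_zero_add, tsum_congr hshift, tsum_mul_left,
    Summable.tsum_finsetSum fun j _ => (hsum j).mul_left _]
  simp only [pow_zero, one_mul, one_mulVec, tsum_mul_left, Pi.add_apply, Pi.smul_apply,
    smul_eq_mul]
  rfl

end Matrix

def policyTransition (T : S → A → S → ℝ) (π : S → A → ℝ) : Matrix S S ℝ :=
  fun s s' => ∑ a, π s a * T s a s'

def policyReward (π : S → A → ℝ) (r : S → A → ℝ) : S → ℝ :=
  fun s => ∑ a, π s a * r s a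

lemma policyTransition_mem_rowStochastic {T : S → A → S → ℝ} {π : S → A → ℝ}
    (hT : IsKernel T) (hπ : IsPolicy π) : policyTransition T π ∈ rowStochastic ℝ S := by
  refine mem_rowStochastic_iff_sum.2 ⟨fun s s' => Finset.sum_nonneg fun a _ =>
    mul_nonneg (hπ.1 s a) (hT.1 s a s'), fun s => ?_⟩
  simp only [policyTransition]
  rw [Finset.sum_comm]
  simp only [← Finset.mul_sum, hT.2, mul_one, hπ.2]

lemma sum_sum_mul_policy_eq_dotProduct (π : S → A → ℝ) (d : S → ℝ) (f : S → A → ℝ) :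
    ∑ s, ∑ a, d s * π s a * f s a = d ⬝ᵥ fun s => ∑ a, π s a * f s a := by
  simp only [dotProduct, Finset.mul_sum, mul_assoc]

lemma policyTransition_mulVec (T : S → A → S → ℝ) (π : S → A → ℝ) (f : S → ℝ) :
    policyTransition T π *ᵥ f = fun s => ∑ a, π s a * ∑ s', T s a s' * f s' := by
  ext s
  simp only [mulVec, dotProduct, policyTransition, Finset.sum_mul, Finset.mul_sum, mul_assoc]
  exact Finset.sum_comm

lemma stateDist_succ (T : S → A → S → ℝ) (π : S → A → ℝ) (μ0 : S → ℝ) (t : ℕ) :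
    stateDist T π μ0 (t + 1) = stateDist T π μ0 t ᵥ* policyTransition T π :=
  funext fun s' => sum_sum_mul_policy_eq_dotProduct π _ fun s a => T s a s'

lemma stateDist_eq_vecMul_pow (T : S → A → S → ℝ) (π : S → A → ℝ) (μ0 : S → ℝ) (t : ℕ) :
    stateDist T π μ0 t = μ0 ᵥ* policyTransition T π ^ t := by
  induction t with
  | zero => simp [stateDist]
  | succ t ih => rw [stateDist_succ, ih, vecMul_vecMul, pow_succ]

lemma value_eq_tsum (γ : ℝ) (T : S → A → S → ℝ) (π : S → A → ℝ) (r : S → A → ℝ) :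
    value γ T π r
      = fun s => ∑' t : ℕ, γ ^ t * (policyTransition T π ^ t *ᵥ policyReward π r) s := by
  ext s
  have hdirac : (fun x => if x = s then (1 : ℝ) else 0) = Pi.single s 1 := by
    ext x; simp [Pi.single_apply]
  refine tsum_congr fun t => ?_
  rw [sum_sum_mul_policy_eq_dotProduct, hdirac, stateDist_eq_vecMul_pow, ← dotProduct_mulVec,
    single_dotProduct, one_mul]
  rfl

lemma value_eq_add_smul_mulVec {γ : ℝ} (hγ0 : 0 ≤ γ) (hγ1 : γ < 1) {T : S → A → S → ℝ}
    (hT : IsKernel T) {π : S → A → ℝ} (hπ : IsPolicy π) (r : S → A → ℝ) :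
    value γ T π r = policyReward π r + γ • (policyTransition T π *ᵥ value γ T π r) := by
  rw [value_eq_tsum]
  exact tsum_pow_mul_pow_mulVec_eq_add_smul_mulVec hγ0 hγ1
    (policyTransition_mem_rowStochastic hT hπ) _

lemma sum_policy_mul_Gpi (γ : ℝ) (T Th : S → A → S → ℝ) (π : S → A → ℝ) (r : S → A → ℝ) :
    (fun s => ∑ a, π s a * Gpi γ T Th π r s a)
      = policyTransition Th π *ᵥ value γ T π r - policyTransition T π *ᵥ value γ T π r := by
  ext s
  simp only [Gpi, mul_sub, Finset.sum_sub_distrib, Pi.sub_apply, policyTransition_mulVec]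

lemma Wmix_eq_dotProduct (γ : ℝ) (T Th : S → A → S → ℝ) (π : S → A → ℝ) (μ0 : S → ℝ)
    (r : S → A → ℝ) (j : ℕ) :
    Wmix γ T Th π μ0 r j
      = ∑ t ∈ Finset.range j, γ ^ t * (stateDist Th π μ0 t ⬝ᵥ policyReward π r)
        + γ ^ j * (stateDist Th π μ0 j ⬝ᵥ value γ T π r) := by
  simp only [Wmix, sum_sum_mul_policy_eq_dotProduct]
  rfl

theorem Wmix_succ_sub_general (γ : ℝ) (hγ0 : 0 < γ) (hγ1 : γ < 1)
    (T Th : S → A → S → ℝ) (hT : IsKernel T)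
    (μ0 : S → ℝ) (r : S → A → ℝ)
    (π : S → A → ℝ) (hπ : IsPolicy π) :
    ∀ j : ℕ, Wmix γ T Th π μ0 r (j + 1) - Wmix γ T Th π μ0 r j
      = γ ^ (j + 1) * ∑ s, ∑ a, stateDist Th π μ0 j s * π s a * Gpi γ T Th π r s a := by
  intro j
  have bellman : stateDist Th π μ0 j ⬝ᵥ value γ T π r
      = stateDist Th π μ0 j ⬝ᵥ policyReward π r
        + γ * (stateDist Th π μ0 j ⬝ᵥ (policyTransition T π *ᵥ value γ T π r)) := by
    conv_lhs => rw [value_eq_add_smul_mulVec hγ0.le hγ1 hT hπ r]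
    rw [dotProduct_add, dotProduct_smul, smul_eq_mul]
  rw [Wmix_eq_dotProduct, Wmix_eq_dotProduct, Finset.sum_range_succ, stateDist_succ,
    ← dotProduct_mulVec, sum_sum_mul_policy_eq_dotProduct, sum_policy_mul_Gpi, dotProduct_sub,
    bellman]
  ring

/-- Key step of the telescoping lemma:
W_{j+1} − W_j = γ^{j+1} · E_{s_j,a_j ∼ π,T̂}[G^π(s_j,a_j)]. -/
theorem Wmix_succ_sub (γ : ℝ) (hγ0 : 0 < γ) (hγ1 : γ < 1)
    (T Th : S → A → S → ℝ) (hT : IsKernel T) (hTh : IsKernel Th)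
    (μ0 : S → ℝ) (hμ : IsDist μ0) (r : S → A → ℝ)
    (rmax : ℝ) (hr : ∀ s a, |r s a| ≤ rmax)
    (π : S → A → ℝ) (hπ : IsPolicy π) :
    ∀ j : ℕ, Wmix γ T Th π μ0 r (j + 1) - Wmix γ T Th π μ0 r j
      = γ ^ (j + 1) * ∑ s, ∑ a, stateDist Th π μ0 j s * π s a * Gpi γ T Th π r s a :=
  Wmix_succ_sub_general γ hγ0 hγ1 T Th hT μ0 r π hπ

end MDP
end
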